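/- arXiv:2009.05020 — 2 statements merged into one kernel-verified Lean document; each statement's English description precedes it below -/
import Mathlib

section
/- Let a : ℤ → ℂ^{r×r} be a finitely supported mask with order m+1 sum rules with respect to a finitely supported υ : ℤ → ℂ^{1×r} with υ̂(0) ≠ 0, i.e., υ̂(2ξ)â(ξ) = υ̂(ξ) + O(|ξ|^{m+1}) and υ̂(2ξ)â(ξ+π) = O(|ξ|^{m+1}) as ξ → 0. Then for each j = 0,…,m, the vector polynomial p⃗_j := ((·)^j/j!)*υ satisfies S_a p⃗_j = 2^{-j} p⃗_j and deg(p⃗_j) = j. -/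
open Complex Polynomial

/-- Symbol (Fourier series) of a scalar sequence. -/
noncomputable def symb (u : ℤ → ℂ) (ξ : ℂ) : ℂ :=
  ∑ᶠ k : ℤ, u k * Complex.exp (-Complex.I * k * ξ)

/-- Entrywise symbol of a matrix-valued sequence. -/
noncomputable def symbM {r : ℕ} (a : ℤ → Fin r → Fin r → ℂ) (i ℓ : Fin r) (ξ : ℂ) : ℂ :=
  ∑ᶠ k : ℤ, a k i ℓ * Complex.exp (-Complex.I * k * ξ)

/-- Vector subdivision operator on row-vector sequences. -/
noncomputable def sd {r : ℕ} (a : ℤ → Fin r → Fin r → ℂ) (w : ℤ → Fin r → ℂ) :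
    ℤ → Fin r → ℂ :=
  fun j ℓ => 2 * ∑ᶠ k : ℤ, ∑ i : Fin r, w k i * a (j - 2 * k) i ℓ

/-- Convolution of a polynomial with a finitely supported sequence, as a polynomial. -/
noncomputable def pconv (q : Polynomial ℂ) (u : ℤ → ℂ) : Polynomial ℂ :=
  ∑ᶠ k : ℤ, u k • (q.comp (Polynomial.X - Polynomial.C (k : ℂ)))

/-!
Expanding the symbols as finite exponential sums and differentiating at `0`, the sum rules become
moment conditions: for `t ≤ m`, `∑ₛ,ₙ υ(s) a(n) (2s+n)^t = ∑ₖ υ(k) k^t`, and the alternating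
moments `∑ₛ,ₙ υ(s) a(n) (-1)^n (2s+n)^t` vanish (the shift by `π` in the second sum rule produces
the sign `(-1)^n`). A sum `∑ c_d (x - μ_d)^j` depends only on the moments of order `≤ j` of
`(c, μ)`. In `(S_a p⃗_j)(x)`, substituting `n = x - 2k` leaves a sum over `n ≡ x (mod 2)`, which is
half of the full sum plus `(-1)^x` times the alternating one; by the moment conditions these are
`2^{-j} p⃗_j(x)` and `0`. Finally, the coefficient of `x^j` in `p⃗_j` is `υ̂(0) / j!`.
-/

open scoped Nat

lemma sum_mul_sub_pow_eq_sum_moments {R ι : Type*} [CommRing R] (D : Finset ι) (c μ : ι → R)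
    (j : ℕ) (x : R) :
    ∑ d ∈ D, c d * (x - μ d) ^ j =
      ∑ t ∈ Finset.range (j + 1),
        (-1) ^ (t + j) * x ^ t * j.choose t * ∑ d ∈ D, c d * μ d ^ (j - t) := by
  simp_rw [sub_pow, Finset.mul_sum]
  rw [Finset.sum_comm]
  exact Finset.sum_congr rfl fun t _ => Finset.sum_congr rfl fun d _ => by ring

lemma sum_mul_sub_pow_eq_of_moments {R ι κ : Type*} [CommRing R] {D : Finset ι} {E : Finset κ}
    {c μ : ι → R} {c' ν : κ → R} {j : ℕ}
    (h : ∀ t ≤ j, ∑ d ∈ D, c d * μ d ^ t = ∑ e ∈ E, c' e * ν e ^ t) (x : R) :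
    ∑ d ∈ D, c d * (x - μ d) ^ j = ∑ e ∈ E, c' e * (x - ν e) ^ j := by
  rw [sum_mul_sub_pow_eq_sum_moments, sum_mul_sub_pow_eq_sum_moments]
  exact Finset.sum_congr rfl fun t _ => by rw [h (j - t) (Nat.sub_le _ _)]

lemma two_mul_finsum_comp_sub_two_mul {g : ℤ → ℂ} {N : Finset ℤ} (hg : Function.support g ⊆ N)
    (x : ℤ) :
    2 * ∑ᶠ k : ℤ, g (x - 2 * k) = ∑ n ∈ N, g n + (-1) ^ x * ∑ n ∈ N, (-1) ^ n * g n := by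
  classical
  set E : Set ℤ := {n | Even (x - n)}
  have hrange : Set.range (fun k : ℤ => x - 2 * k) = E := by
    ext n
    simp only [Set.mem_range, E, Set.mem_ofPred_eq, even_iff_exists_two_mul]
    constructor
    · rintro ⟨k, rfl⟩; exact ⟨k, by ring⟩
    · rintro ⟨k, hk⟩; exact ⟨k, by omega⟩
  have hinj : Function.Injective (fun k : ℤ => x - 2 * k) := fun k k' h => by simp at h; omega
  rw [← finsum_mem_range hinj, hrange, finsum_mem_def,
    finsum_eq_sum_of_support_subset (E.indicator g)
      (by rw [Set.support_indicator]; exact Set.inter_subset_right.trans hg),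
    Finset.mul_sum, Finset.mul_sum, ← Finset.sum_add_distrib]
  refine Finset.sum_congr rfl fun n _ => ?_
  rw [← mul_assoc, ← zpow_add₀ (by norm_num : (-1 : ℂ) ≠ 0)]
  rcases Int.even_or_odd (x - n) with h | h
  · have h' : Even (x + n) := by simpa [Int.even_add, Int.even_sub] using h
    rw [Set.indicator_of_mem (show n ∈ E from h), h'.neg_one_zpow]; ring
  · have h' : Odd (x + n) := by
      rw [← Int.not_even_iff_odd] at h ⊢; simpa [Int.even_add, Int.even_sub] using h
    rw [Set.indicator_of_notMem (show n ∉ E from Int.not_even_iff_odd.mpr h), h'.neg_one_zpow]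
    ring

lemma iteratedDeriv_sum_mul_cexp_zero {ι : Type*} (D : Finset ι) (c m : ι → ℂ) (t : ℕ) :
    iteratedDeriv t (fun ξ : ℂ => ∑ d ∈ D, c d * cexp (-I * m d * ξ)) 0 =
      (-I) ^ t * ∑ d ∈ D, c d * m d ^ t := by
  rw [iteratedDeriv_fun_sum fun d _ => by fun_prop, Finset.mul_sum]
  refine Finset.sum_congr rfl fun d _ => ?_
  rw [iteratedDeriv_const_mul_field, iteratedDeriv_cexp_const_mul]
  simp only [mul_zero, exp_zero]
  ring

lemma cexp_neg_I_mul_int_mul_pi (n : ℤ) : cexp (-I * n * Real.pi) = (-1) ^ n := by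
  rw [show -I * n * Real.pi = n * -(Real.pi * I) by ring, exp_int_mul, exp_neg, exp_pi_mul_I]
  norm_num

lemma symb_eq_sum {u : ℤ → ℂ} {S : Finset ℤ} (h : Function.support u ⊆ S) (ξ : ℂ) :
    symb u ξ = ∑ k ∈ S, u k * cexp (-I * k * ξ) := by
  refine finsum_eq_sum_of_support_subset _ fun k hk => h ?_
  simp only [Function.mem_support] at hk ⊢
  exact fun h0 => hk (by rw [h0, zero_mul])

lemma symbM_eq_symb {r : ℕ} (a : ℤ → Fin r → Fin r → ℂ) (i ℓ : Fin r) :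
    symbM a i ℓ = symb (fun k => a k i ℓ) := rfl

lemma symb_zero {u : ℤ → ℂ} {S : Finset ℤ} (h : Function.support u ⊆ S) :
    symb u 0 = ∑ k ∈ S, u k := by
  simp [symb_eq_sum h]

section Pconv

variable {u : ℤ → ℂ} {S : Finset ℤ}

lemma pconv_eq_sum (h : Function.support u ⊆ S) (q : ℂ[X]) :
    pconv q u = ∑ k ∈ S, u k • q.comp (X - C (k : ℂ)) := by
  refine finsum_eq_sum_of_support_subset _ fun k hk => h ?_
  simp only [Function.mem_support] at hk ⊢
  exact fun h0 => hk (by rw [h0, zero_smul])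

lemma eval_pconv (h : Function.support u ⊆ S) (q : ℂ[X]) (z : ℂ) :
    (pconv q u).eval z = ∑ k ∈ S, u k * q.eval (z - k) := by
  simp [pconv_eq_sum h, eval_finsetSum]

lemma natDegree_pconv_le (h : Function.support u ⊆ S) (q : ℂ[X]) :
    (pconv q u).natDegree ≤ q.natDegree := by
  rw [pconv_eq_sum h]
  refine natDegree_sum_le_of_forall_le _ _ fun k _ => (natDegree_smul_le _ _).trans ?_
  rw [natDegree_comp, natDegree_X_sub_C, mul_one]

lemma coeff_pconv_natDegree (h : Function.support u ⊆ S) (q : ℂ[X]) :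
    (pconv q u).coeff q.natDegree = q.leadingCoeff * ∑ k ∈ S, u k := by
  have hcomp (k : ℂ) : (q.comp (X - C k)).coeff q.natDegree = q.leadingCoeff := by
    have := coeff_comp_degree_mul_degree (p := q) (q := X - C k)
      (by rw [natDegree_X_sub_C]; exact one_ne_zero)
    rwa [natDegree_X_sub_C, leadingCoeff_X_sub_C, one_pow, mul_one, mul_one] at this
  rw [pconv_eq_sum h, finsetSum_coeff, Finset.mul_sum]
  exact Finset.sum_congr rfl fun k _ => by rw [coeff_smul, hcomp, smul_eq_mul, mul_comm]

end Pconv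

section SumRules

variable {r : ℕ} {a : ℤ → Fin r → Fin r → ℂ} {υ : ℤ → Fin r → ℂ} {S N : Finset ℤ}

lemma sum_symb_mul_symbM_eq (hS : ∀ i, Function.support (fun k => υ k i) ⊆ S)
    (hN : ∀ i ℓ, Function.support (fun k => a k i ℓ) ⊆ N) (ℓ : Fin r) (θ ξ : ℂ) :
    ∑ i, symb (fun k => υ k i) (2 * ξ) * symbM a i ℓ (ξ + θ) =
      ∑ p ∈ S ×ˢ N, ((∑ i, υ p.1 i * a p.2 i ℓ) * cexp (-I * p.2 * θ)) *
        cexp (-I * (2 * p.1 + p.2) * ξ) := by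
  simp only [symbM_eq_symb, symb_eq_sum (hS _), symb_eq_sum (hN _ ℓ), Finset.sum_mul,
    Finset.mul_sum, Finset.sum_product_right]
  rw [Finset.sum_comm]
  refine Finset.sum_congr rfl fun n _ => ?_
  rw [Finset.sum_comm]
  refine Finset.sum_congr rfl fun s _ => Finset.sum_congr rfl fun i _ => ?_
  rw [show -I * (2 * s + n) * ξ = -I * s * (2 * ξ) + -I * n * ξ by ring, exp_add,
    show -I * n * (ξ + θ) = -I * n * ξ + -I * n * θ by ring, exp_add]
  ring

lemma moment_eq_of_sum_rule (hS : ∀ i, Function.support (fun k => υ k i) ⊆ S)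
    (hN : ∀ i ℓ, Function.support (fun k => a k i ℓ) ⊆ N) (ℓ : Fin r) (t : ℕ)
    (h : iteratedDeriv t
        (fun ξ : ℂ => (∑ i : Fin r, symb (fun k => υ k i) (2 * ξ) * symbM a i ℓ ξ) -
          symb (fun k => υ k ℓ) ξ) 0 = 0) :
    ∑ p ∈ S ×ˢ N, (∑ i, υ p.1 i * a p.2 i ℓ) * (2 * p.1 + p.2) ^ t =
      ∑ k ∈ S, υ k ℓ * k ^ t := by
  have hfun : (fun ξ : ℂ => (∑ i : Fin r, symb (fun k => υ k i) (2 * ξ) * symbM a i ℓ ξ) -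
      symb (fun k => υ k ℓ) ξ) = fun ξ =>
        (∑ p ∈ S ×ˢ N, (∑ i, υ p.1 i * a p.2 i ℓ) * cexp (-I * (2 * p.1 + p.2) * ξ)) -
          ∑ k ∈ S, υ k ℓ * cexp (-I * k * ξ) := by
    funext ξ
    simpa [symb_eq_sum (hS ℓ)] using sum_symb_mul_symbM_eq hS hN ℓ 0 ξ
  rw [hfun, iteratedDeriv_fun_sub (by fun_prop) (by fun_prop), iteratedDeriv_sum_mul_cexp_zero,
    iteratedDeriv_sum_mul_cexp_zero, ← mul_sub, mul_eq_zero, sub_eq_zero] at h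
  exact h.resolve_left (pow_ne_zero _ (neg_ne_zero.mpr I_ne_zero))

lemma alternating_moment_eq_zero_of_sum_rule (hS : ∀ i, Function.support (fun k => υ k i) ⊆ S)
    (hN : ∀ i ℓ, Function.support (fun k => a k i ℓ) ⊆ N) (ℓ : Fin r) (t : ℕ)
    (h : iteratedDeriv t
        (fun ξ : ℂ => ∑ i : Fin r, symb (fun k => υ k i) (2 * ξ) *
          symbM a i ℓ (ξ + (Real.pi : ℂ))) 0 = 0) :
    ∑ p ∈ S ×ˢ N, (∑ i, υ p.1 i * a p.2 i ℓ) * (-1) ^ p.2 * (2 * p.1 + p.2) ^ t = 0 := by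
  simp only [sum_symb_mul_symbM_eq hS hN ℓ, cexp_neg_I_mul_int_mul_pi,
    iteratedDeriv_sum_mul_cexp_zero] at h
  exact (mul_eq_zero.mp h).resolve_left (pow_ne_zero _ (neg_ne_zero.mpr I_ne_zero))

lemma sd_pconv_monomial_eq (hS : ∀ i, Function.support (fun k => υ k i) ⊆ S)
    (hN : ∀ i ℓ, Function.support (fun k => a k i ℓ) ⊆ N) (j : ℕ) (ℓ : Fin r)
    (hmom : ∀ t ≤ j, ∑ p ∈ S ×ˢ N, (∑ i, υ p.1 i * a p.2 i ℓ) * (2 * p.1 + p.2) ^ t =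
      ∑ k ∈ S, υ k ℓ * k ^ t)
    (halt : ∀ t ≤ j,
      ∑ p ∈ S ×ˢ N, (∑ i, υ p.1 i * a p.2 i ℓ) * (-1) ^ p.2 * (2 * p.1 + p.2) ^ t = 0)
    (x : ℤ) :
    sd a (fun k i => (pconv (C (j ! : ℂ)⁻¹ * X ^ j) (fun n => υ n i)).eval (k : ℂ)) x ℓ =
      ((2 : ℂ) ^ j)⁻¹ * (pconv (C (j ! : ℂ)⁻¹ * X ^ j) (fun n => υ n ℓ)).eval (x : ℂ) := by
  set c : ℂ := ((2 : ℂ) ^ j * j !)⁻¹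
  set G : ℤ → ℂ := fun n => ∑ s ∈ S, (∑ i, υ s i * a n i ℓ) * ((x : ℂ) - (2 * s + n)) ^ j
  have hG_supp : Function.support (fun n => c * G n) ⊆ N := by
    refine (Function.support_mul_subset_right _ _).trans fun n hn => ?_
    by_contra hnN
    refine hn (Finset.sum_eq_zero fun s _ => ?_)
    have ha : ∀ i, a n i ℓ = 0 := fun i => Function.notMem_support.mp fun h => hnN (hN i ℓ h)
    simp [ha]
  have hterm (k : ℤ) : ∑ i, (pconv (C (j ! : ℂ)⁻¹ * X ^ j) (fun n => υ n i)).eval (k : ℂ) *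
      a (x - 2 * k) i ℓ = c * G (x - 2 * k) := by
    simp only [G, eval_pconv (hS _), Finset.mul_sum, Finset.sum_mul]
    rw [Finset.sum_comm]
    refine Finset.sum_congr rfl fun s _ => Finset.sum_congr rfl fun i _ => ?_
    have : (x : ℂ) - (2 * s + ((x - 2 * k : ℤ) : ℂ)) = 2 * ((k : ℂ) - s) := by push_cast; ring
    simp only [eval_mul, eval_C, eval_pow, eval_X, this, mul_pow, c]
    field_simp
  have hG_sum : ∑ n ∈ N, G n = ∑ k ∈ S, υ k ℓ * ((x : ℂ) - k) ^ j := by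
    rw [← Finset.sum_product_right (f := fun p : ℤ × ℤ =>
      (∑ i, υ p.1 i * a p.2 i ℓ) * ((x : ℂ) - (2 * p.1 + p.2)) ^ j)]
    exact sum_mul_sub_pow_eq_of_moments hmom x
  have hG_alt : ∑ n ∈ N, (-1) ^ n * G n = 0 := by
    have := sum_mul_sub_pow_eq_of_moments (E := (∅ : Finset ℤ)) (c' := 0) (ν := 0)
      (fun t ht => by rw [halt t ht, Finset.sum_empty]) (x : ℂ)
    rw [Finset.sum_empty, Finset.sum_product_right] at this
    simp only [G, Finset.mul_sum]
    rw [← this]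
    exact Finset.sum_congr rfl fun n _ => Finset.sum_congr rfl fun s _ => by ring
  calc sd a _ x ℓ = 2 * ∑ᶠ k : ℤ, c * G (x - 2 * k) := by simp only [sd, hterm]
    _ = c * (∑ n ∈ N, G n + (-1) ^ x * ∑ n ∈ N, (-1) ^ n * G n) := by
      have hcomm (n : ℤ) : (-1) ^ n * (c * G n) = c * ((-1) ^ n * G n) := by ring
      simp only [two_mul_finsum_comp_sub_two_mul hG_supp, hcomm, ← Finset.mul_sum]
      ring
    _ = _ := by
      rw [hG_sum, hG_alt, mul_zero, add_zero, eval_pconv (hS ℓ), Finset.mul_sum, Finset.mul_sum]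
      refine Finset.sum_congr rfl fun k _ => ?_
      simp only [eval_mul, eval_C, eval_pow, eval_X, c]
      ring

end SumRules

/-- if `a` has order `m+1` sum rules w.r.t. `υ` with `υ̂(0) ≠ 0`, then
`p⃗_j := ((·)^j/j!)*υ` satisfies `S_a p⃗_j = 2^{-j} p⃗_j` and `deg p⃗_j = j` for `j = 0,…,m`. -/
theorem stmt8 (r m : ℕ) (a : ℤ → Fin r → Fin r → ℂ)
    (ha : (Function.support a).Finite)
    (υ : ℤ → Fin r → ℂ) (hυ : (Function.support υ).Finite)
    (hυ0 : (fun ℓ => symb (fun k => υ k ℓ) 0) ≠ 0)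
    (hsr1 : ∀ j ≤ m, ∀ ℓ : Fin r,
      iteratedDeriv j
        (fun ξ : ℂ => (∑ i : Fin r, symb (fun k => υ k i) (2 * ξ) * symbM a i ℓ ξ) -
          symb (fun k => υ k ℓ) ξ) 0 = 0)
    (hsr2 : ∀ j ≤ m, ∀ ℓ : Fin r,
      iteratedDeriv j
        (fun ξ : ℂ => ∑ i : Fin r, symb (fun k => υ k i) (2 * ξ) *
          symbM a i ℓ (ξ + (Real.pi : ℂ))) 0 = 0) :
    ∀ j ≤ m,
      (∀ x : ℤ, ∀ ℓ : Fin r,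
        sd a (fun k i => (pconv (Polynomial.C ((Nat.factorial j : ℂ))⁻¹ * Polynomial.X ^ j)
          (fun n => υ n i)).eval ((k : ℂ))) x ℓ =
        ((2 : ℂ) ^ j)⁻¹ * (pconv (Polynomial.C ((Nat.factorial j : ℂ))⁻¹ * Polynomial.X ^ j)
          (fun n => υ n ℓ)).eval ((x : ℂ))) ∧
      (∀ ℓ : Fin r, (pconv (Polynomial.C ((Nat.factorial j : ℂ))⁻¹ * Polynomial.X ^ j)
          (fun n => υ n ℓ)).degree ≤ (j : ℕ)) ∧
      (∃ ℓ : Fin r, (pconv (Polynomial.C ((Nat.factorial j : ℂ))⁻¹ * Polynomial.X ^ j)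
          (fun n => υ n ℓ)).degree = (j : ℕ)) := by
  intro j hj
  obtain ⟨S, hS⟩ : ∃ S : Finset ℤ, ∀ i, Function.support (fun k => υ k i) ⊆ S :=
    ⟨hυ.toFinset, fun i k hk => hυ.mem_toFinset.mpr fun h0 => hk (congrFun h0 i)⟩
  obtain ⟨N, hN⟩ : ∃ N : Finset ℤ, ∀ i ℓ, Function.support (fun k => a k i ℓ) ⊆ N :=
    ⟨ha.toFinset, fun i ℓ k hk => ha.mem_toFinset.mpr fun h0 => hk (by simp [h0])⟩
  have hc : (j ! : ℂ)⁻¹ ≠ 0 := inv_ne_zero (Nat.cast_ne_zero.mpr j.factorial_ne_zero)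
  have hdeg : (C (j ! : ℂ)⁻¹ * X ^ j).natDegree = j := natDegree_C_mul_X_pow j _ hc
  have hdeg_le (ℓ : Fin r) :
      (pconv (C (j ! : ℂ)⁻¹ * X ^ j) (fun n => υ n ℓ)).degree ≤ (j : ℕ) :=
    degree_le_of_natDegree_le ((natDegree_pconv_le (hS ℓ) _).trans hdeg.le)
  refine ⟨fun x ℓ => sd_pconv_monomial_eq hS hN j ℓ
      (fun t ht => moment_eq_of_sum_rule hS hN ℓ t (hsr1 t (ht.trans hj) ℓ))
      (fun t ht => alternating_moment_eq_zero_of_sum_rule hS hN ℓ t (hsr2 t (ht.trans hj) ℓ)) x,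
    hdeg_le, ?_⟩
  obtain ⟨ℓ, hℓ⟩ := Function.ne_iff.mp hυ0
  refine ⟨ℓ, degree_eq_of_le_of_coeff_ne_zero (hdeg_le ℓ) ?_⟩
  have hcoeff := coeff_pconv_natDegree (hS ℓ) (C (j ! : ℂ)⁻¹ * X ^ j)
  rw [hdeg, leadingCoeff_C_mul_X_pow, ← symb_zero (hS ℓ)] at hcoeff
  exact hcoeff ▸ mul_ne_zero hc hℓ
end

section
/- Let a : ℤ → ℂ^{r×r} be a finitely supported mask with order m+1 sum rules with respect to υ (υ̂(0) ≠ 0), and let U : ℤ → ℂ^{r×r} be any strongly invertible finitely supported sequence. Define the new mask å by \widehat{å}(ξ) := (Û(2ξ))^{-1} â(ξ) Û(ξ). Then å is finitely supported and has order m+1 sum rules with respect to ů defined by \widehat{ů}(ξ) := υ̂(ξ)Û(ξ); moreover, if φ is an r×1 vector of compactly supported distributions with φ̂(2ξ) = â(ξ)φ̂(ξ), then φ̊ defined by \widehat{φ̊}(ξ) := (Û(ξ))^{-1}φ̂(ξ) is a vector of compactly supported distributions with \widehat{φ̊}(2ξ) = \widehat{å}(ξ)\widehat{φ̊}(ξ).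 -/
/-!
Symbols of finitely supported matrix sequences are the images of the convolution algebra
`Matrix[ℤ]` under a ring homomorphism, so `Ŵ(2ξ) â(ξ) Û(ξ)` is again the symbol of a finitely
supported mask `b`. With `Û Ŵ = 1` one has
`υ̂(2ξ) Û(2ξ) b̂(ξ) - υ̂(ξ) Û(ξ) = (υ̂(2ξ) â(ξ) - υ̂(ξ)) Û(ξ)`
and, since `Ŵ` is `2π`-periodic,
`υ̂(2ξ) Û(2ξ) b̂(ξ + π) = υ̂(2ξ) â(ξ + π) Û(ξ + π)`.
By the Leibniz rule, multiplying by the smooth `Û` preserves vanishing to order `m + 1` at `0`,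
so the sum rules carry over.
-/

open Complex

/-- Symbol of a matrix-valued sequence. -/
noncomputable def symbMat {r : ℕ} (a : ℤ → Matrix (Fin r) (Fin r) ℂ) (ξ : ℂ) :
    Matrix (Fin r) (Fin r) ℂ :=
  ∑ᶠ k : ℤ, Complex.exp (-Complex.I * k * ξ) • a k

open Function Matrix

noncomputable def expChar (ξ : ℂ) : Multiplicative ℤ →* ℂ where
  toFun k := exp (-I * k.toAdd * ξ)
  map_one' := by simp
  map_mul' x y := by simp only [toAdd_mul, Int.cast_add, ← exp_add]; ring_nf

/-- Finitely supported matrix sequences with convolution form the algebra `Matrix[ℤ]`, and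
taking the symbol at `ξ` is a ring homomorphism out of it. -/
noncomputable def symbolRingHom (r : ℕ) (ξ : ℂ) :
    AddMonoidAlgebra (Matrix (Fin r) (Fin r) ℂ) ℤ →+* Matrix (Fin r) (Fin r) ℂ :=
  AddMonoidAlgebra.liftNCRingHom (RingHom.id _)
    ((algebraMap ℂ _).toMonoidHom.comp (expChar ξ))
    fun _ _ => Algebra.commute_algebraMap_right _ _

section Symbol

variable {r : ℕ}

theorem symbMat_finsupp (f : ℤ →₀ Matrix (Fin r) (Fin r) ℂ) (ξ : ℂ) :
    symbMat ⇑f ξ = f.sum fun k c => exp (-I * k * ξ) • c :=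
  finsum_eq_sum_of_support_subset _ fun k hk => by simpa using right_ne_zero_of_smul hk

theorem symbMat_coeff (x : AddMonoidAlgebra (Matrix (Fin r) (Fin r) ℂ) ℤ) (ξ : ℂ) :
    symbMat ⇑x.coeff ξ = symbolRingHom r ξ x := by
  rw [symbMat_finsupp]
  simp [symbolRingHom, AddMonoidAlgebra.liftNCRingHom, AddMonoidAlgebra.liftNC, expChar,
    Algebra.smul_def, Algebra.commutes]

theorem symbMat_mapDomain_mul_left (f : ℤ →₀ Matrix (Fin r) (Fin r) ℂ) (n : ℤ) (ξ : ℂ) :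
    symbMat ⇑(f.mapDomain (n * ·)) ξ = symbMat ⇑f (n * ξ) := by
  rw [symbMat_finsupp, symbMat_finsupp,
    Finsupp.sum_mapDomain_index (by simp) (by simp [smul_add])]
  congr! 2 with k c
  push_cast
  ring_nf

theorem exists_finite_support_symbMat_eq (W a U : ℤ → Matrix (Fin r) (Fin r) ℂ)
    (hW : (support W).Finite) (ha : (support a).Finite) (hU : (support U).Finite) :
    ∃ b : ℤ → Matrix (Fin r) (Fin r) ℂ, (support b).Finite ∧
      ∀ ξ, symbMat b ξ = symbMat W (2 * ξ) * symbMat a ξ * symbMat U ξ := by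
  let toAlg (x : ℤ → Matrix (Fin r) (Fin r) ℂ) (hx : (support x).Finite) :=
    AddMonoidAlgebra.ofCoeff (Finsupp.ofSupportFinite x hx)
  let W₂ := AddMonoidAlgebra.ofCoeff ((Finsupp.ofSupportFinite W hW).mapDomain ((2 : ℤ) * ·))
  refine ⟨⇑(W₂ * toAlg a ha * toAlg U hU).coeff, Finsupp.hasFiniteSupport _, fun ξ => ?_⟩
  rw [symbMat_coeff, map_mul, map_mul, ← symbMat_coeff, ← symbMat_coeff, ← symbMat_coeff,
    symbMat_mapDomain_mul_left]
  rfl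

theorem symbMat_add_two_pi (a : ℤ → Matrix (Fin r) (Fin r) ℂ) (ξ : ℂ) :
    symbMat a (ξ + 2 * Real.pi) = symbMat a ξ := by
  refine finsum_congr fun k => ?_
  rw [show -I * k * (ξ + 2 * Real.pi) = -I * k * ξ + (-k : ℤ) * (2 * Real.pi * I) by
      push_cast; ring,
    exp_add, exp_int_mul_two_pi_mul_I, mul_one]

theorem symb_eq_sum_s16 {u : ℤ → ℂ} (hu : (support u).Finite) :
    symb u = fun ξ => ∑ k ∈ hu.toFinset, u k * exp (-I * k * ξ) :=
  funext fun _ => finsum_eq_sum_of_support_subset _ fun k hk => by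
    simpa using left_ne_zero_of_mul hk

theorem contDiff_symb {u : ℤ → ℂ} (hu : (support u).Finite) {n : WithTop ℕ∞} :
    ContDiff ℂ n (symb u) := by
  rw [symb_eq_sum_s16 hu]
  fun_prop

theorem symbMat_apply {a : ℤ → Matrix (Fin r) (Fin r) ℂ} (ha : (support a).Finite) (ξ : ℂ)
    (i j : Fin r) : symbMat a ξ i j = symb (fun k => a k i j) ξ := by
  have hsub : support (fun k : ℤ => exp (-I * k * ξ) • a k) ⊆ ha.toFinset :=
    fun k hk => by simpa using right_ne_zero_of_smul hk
  have hsub' : support (fun k : ℤ => a k i j * exp (-I * k * ξ)) ⊆ ha.toFinset :=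
    fun k hk => by simpa using fun h => hk (by simp [h])
  rw [symbMat, symb, finsum_eq_sum_of_support_subset _ hsub,
    finsum_eq_sum_of_support_subset _ hsub', Matrix.sum_apply]
  simp [mul_comm]

theorem contDiff_symbMat_apply {a : ℤ → Matrix (Fin r) (Fin r) ℂ} (ha : (support a).Finite)
    (i j : Fin r) {n : WithTop ℕ∞} : ContDiff ℂ n fun ξ => symbMat a ξ i j := by
  simp_rw [symbMat_apply ha]
  exact contDiff_symb (ha.subset fun k hk h => hk (by simp [h]))

end Symbol

section IteratedDeriv

variable {𝕜 : Type*} [NontriviallyNormedField 𝕜] {x : 𝕜} {m : ℕ}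

theorem iteratedDeriv_fun_mul_eq_zero {𝔸 : Type*} [NormedRing 𝔸] [NormedAlgebra 𝕜 𝔸]
    {f g : 𝕜 → 𝔸} (hf : ContDiffAt 𝕜 m f x) (hg : ContDiffAt 𝕜 m g x)
    (hflat : ∀ j ≤ m, iteratedDeriv j f x = 0) {j : ℕ} (hj : j ≤ m) :
    iteratedDeriv j (fun ξ => f ξ * g ξ) x = 0 := by
  have hj' : (j : WithTop ℕ∞) ≤ m := by exact_mod_cast hj
  rw [iteratedDeriv_fun_mul (hf.of_le hj') (hg.of_le hj')]
  refine Finset.sum_eq_zero fun i hi => ?_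
  rw [hflat i (by grind), mul_zero, zero_mul]

variable {ι κ : Type*} [Fintype ι]

theorem contDiff_vecMul_apply {n : WithTop ℕ∞} {F : 𝕜 → ι → 𝕜} {M : 𝕜 → Matrix ι κ 𝕜}
    (hF : ∀ i, ContDiff 𝕜 n fun ξ => F ξ i) (hM : ∀ i k, ContDiff 𝕜 n fun ξ => M ξ i k)
    (k : κ) :
    ContDiff 𝕜 n fun ξ => (F ξ ᵥ* M ξ) k :=
  ContDiff.sum fun i _ => (hF i).mul (hM i k)

theorem iteratedDeriv_vecMul_apply_eq_zero {F : 𝕜 → ι → 𝕜} {M : 𝕜 → Matrix ι κ 𝕜}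
    (hF : ∀ i, ContDiffAt 𝕜 m (fun ξ => F ξ i) x)
    (hM : ∀ i k, ContDiffAt 𝕜 m (fun ξ => M ξ i k) x)
    (hflat : ∀ i, ∀ j ≤ m, iteratedDeriv j (fun ξ => F ξ i) x = 0) (k : κ) {j : ℕ}
    (hj : j ≤ m) :
    iteratedDeriv j (fun ξ => (F ξ ᵥ* M ξ) k) x = 0 := by
  have hj' : (j : WithTop ℕ∞) ≤ m := by exact_mod_cast hj
  change iteratedDeriv j (fun ξ => ∑ i, F ξ i * M ξ i k) x = 0
  rw [iteratedDeriv_fun_sum fun i _ => ((hF i).mul (hM i k)).of_le hj']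
  exact Finset.sum_eq_zero fun i _ => iteratedDeriv_fun_mul_eq_zero (hF i) (hM i k) (hflat i) hj

end IteratedDeriv

section SumRules

variable {ι : Type*} [Fintype ι] [DecidableEq ι]

/-- Order `m + 1` sum rules of the mask symbol `A` with respect to `v`: both
`v(2ξ) A(ξ) - v(ξ)` and `v(2ξ) A(ξ + π)` vanish to order `m + 1` at `ξ = 0`. -/
def HasSumRules (m : ℕ) (A : ℂ → Matrix ι ι ℂ) (v : ℂ → ι → ℂ) : Prop :=
  (∀ j ≤ m, ∀ ℓ, iteratedDeriv j (fun ξ => (v (2 * ξ) ᵥ* A ξ - v ξ) ℓ) 0 = 0) ∧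
  ∀ j ≤ m, ∀ ℓ, iteratedDeriv j (fun ξ => (v (2 * ξ) ᵥ* A (ξ + Real.pi)) ℓ) 0 = 0

theorem HasSumRules.transform {m : ℕ} {A U W B : ℂ → Matrix ι ι ℂ} {v : ℂ → ι → ℂ}
    (h : HasSumRules m A v) (hv : ∀ i, ContDiff ℂ m fun ξ => v ξ i)
    (hA : ∀ i k, ContDiff ℂ m fun ξ => A ξ i k) (hU : ∀ i k, ContDiff ℂ m fun ξ => U ξ i k)
    (hUW : ∀ ξ, U ξ * W ξ = 1) (hW : ∀ ξ, W (ξ + 2 * Real.pi) = W ξ)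
    (hB : ∀ ξ, B ξ = W (2 * ξ) * A ξ * U ξ) :
    HasSumRules m B fun ξ => v ξ ᵥ* U ξ := by
  have hv2 : ∀ i, ContDiff ℂ m fun ξ => v (2 * ξ) i :=
    fun i => (hv i).comp (contDiff_const.mul contDiff_id)
  refine ⟨fun j hj ℓ => ?_, fun j hj ℓ => ?_⟩
  · have hFA : ∀ i, ContDiff ℂ m fun ξ => (v (2 * ξ) ᵥ* A ξ - v ξ) i :=
      fun i => (contDiff_vecMul_apply hv2 hA i).sub (hv i)
    have hfun : ∀ ξ, (v (2 * ξ) ᵥ* U (2 * ξ)) ᵥ* B ξ - v ξ ᵥ* U ξ =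
        (v (2 * ξ) ᵥ* A ξ - v ξ) ᵥ* U ξ := fun ξ => by
      rw [vecMul_vecMul, hB, ← mul_assoc, ← mul_assoc, hUW, one_mul, ← vecMul_vecMul,
        sub_vecMul]
    simp only [hfun]
    exact iteratedDeriv_vecMul_apply_eq_zero (fun i => (hFA i).contDiffAt)
      (fun i k => (hU i k).contDiffAt) (fun i j hj => h.1 j hj i) ℓ hj
  · have hFA : ∀ i, ContDiff ℂ m fun ξ => (v (2 * ξ) ᵥ* A (ξ + Real.pi)) i :=
      contDiff_vecMul_apply hv2 fun i k => (hA i k).comp (contDiff_id.add contDiff_const)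
    have hfun : ∀ ξ, (v (2 * ξ) ᵥ* U (2 * ξ)) ᵥ* B (ξ + Real.pi) =
        (v (2 * ξ) ᵥ* A (ξ + Real.pi)) ᵥ* U (ξ + Real.pi) := fun ξ => by
      rw [vecMul_vecMul, hB, mul_add, hW, ← mul_assoc, ← mul_assoc, hUW, one_mul,
        ← vecMul_vecMul]
    simp only [hfun]
    exact iteratedDeriv_vecMul_apply_eq_zero (fun i => (hFA i).contDiffAt)
      (fun i k => ((hU i k).comp (contDiff_id.add contDiff_const)).contDiffAt)
      (fun i j hj => h.2 j hj i) ℓ hj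

end SumRules

/-- transforming a mask with sum rules by a strongly invertible `U` yields a
finitely supported mask `å` with `\widehat{å}(ξ) = Û(2ξ)^{-1}â(ξ)Û(ξ)` having order `m+1`
sum rules w.r.t. `ů̂ = υ̂Û`; and the transformed refinable vector satisfies the transformed
refinement equation. -/
theorem stmt16 (r m : ℕ) (a : ℤ → Matrix (Fin r) (Fin r) ℂ)
    (ha : (Function.support a).Finite)
    (υ : ℤ → Fin r → ℂ) (hυ : (Function.support υ).Finite)
    (hυ0 : (fun ℓ => symb (fun k => υ k ℓ) 0) ≠ 0)
    (hsr1 : ∀ j ≤ m, ∀ ℓ : Fin r,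
      iteratedDeriv j
        (fun ξ : ℂ => (∑ i : Fin r, symb (fun k => υ k i) (2 * ξ) * symbMat a ξ i ℓ) -
          symb (fun k => υ k ℓ) ξ) 0 = 0)
    (hsr2 : ∀ j ≤ m, ∀ ℓ : Fin r,
      iteratedDeriv j
        (fun ξ : ℂ => ∑ i : Fin r, symb (fun k => υ k i) (2 * ξ) *
          symbMat a (ξ + (Real.pi : ℂ)) i ℓ) 0 = 0)
    (U W : ℤ → Matrix (Fin r) (Fin r) ℂ)
    (hU : (Function.support U).Finite) (hW : (Function.support W).Finite)
    (hUW : ∀ ξ : ℂ, symbMat U ξ * symbMat W ξ = 1 ∧ symbMat W ξ * symbMat U ξ = 1) :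
    ∃ b : ℤ → Matrix (Fin r) (Fin r) ℂ,
      (Function.support b).Finite ∧
      (∀ ξ : ℂ, symbMat b ξ = symbMat W (2 * ξ) * symbMat a ξ * symbMat U ξ) ∧
      -- sum rules for `b` with respect to `ů̂(ξ) := υ̂(ξ)Û(ξ)`
      ((fun ℓ => ∑ i : Fin r, symb (fun k => υ k i) 0 * symbMat U 0 i ℓ) ≠ 0 ∧
        (∀ j ≤ m, ∀ ℓ : Fin r,
          iteratedDeriv j
            (fun ξ : ℂ =>
              (∑ i : Fin r, (∑ s : Fin r, symb (fun k => υ k s) (2 * ξ) *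
                  symbMat U (2 * ξ) s i) * symbMat b ξ i ℓ) -
                ∑ s : Fin r, symb (fun k => υ k s) ξ * symbMat U ξ s ℓ) 0 = 0) ∧
        (∀ j ≤ m, ∀ ℓ : Fin r,
          iteratedDeriv j
            (fun ξ : ℂ =>
              ∑ i : Fin r, (∑ s : Fin r, symb (fun k => υ k s) (2 * ξ) *
                symbMat U (2 * ξ) s i) * symbMat b (ξ + (Real.pi : ℂ)) i ℓ) 0 = 0)) ∧
      -- the transformed vector `φ̊ := Û^{-1}φ̂` satisfies the transformed refinement relation
      (∀ Φ : Fin r → ℂ → ℂ,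
        (∀ ξ : ℂ, ∀ ℓ : Fin r, Φ ℓ (2 * ξ) = ∑ i : Fin r, symbMat a ξ ℓ i * Φ i ξ) →
        ∀ ξ : ℂ, ∀ ℓ : Fin r,
          (∑ i : Fin r, symbMat W (2 * ξ) ℓ i * Φ i (2 * ξ)) =
            ∑ i : Fin r, symbMat b ξ ℓ i * (∑ s : Fin r, symbMat W ξ i s * Φ s ξ)) := by
  obtain ⟨b, hb, hbsymb⟩ := exists_finite_support_symbMat_eq W a U hW ha hU
  have hυi (i : Fin r) : (support fun k => υ k i).Finite := hυ.subset fun k hk h => hk (by simp [h])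
  have hsr : HasSumRules m (symbMat a) fun ξ i => symb (fun k => υ k i) ξ := ⟨hsr1, hsr2⟩
  have hU0 : IsUnit (symbMat U 0) := ⟨⟨_, _, (hUW 0).1, (hUW 0).2⟩, rfl⟩
  refine ⟨b, hb, hbsymb,
    ⟨fun h => hυ0 (vecMul_injective_of_isUnit hU0 (h.trans (zero_vecMul _).symm)), ?_⟩, ?_⟩
  · exact hsr.transform (fun i => contDiff_symb (hυi i)) (fun i k => contDiff_symbMat_apply ha i k)
      (fun i k => contDiff_symbMat_apply hU i k) (fun ξ => (hUW ξ).1)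
      (symbMat_add_two_pi W) hbsymb
  · intro Φ hΦ ξ ℓ
    have hΦξ : (fun i => Φ i (2 * ξ)) = symbMat a ξ *ᵥ fun i => Φ i ξ := funext (hΦ ξ)
    refine congrFun (?_ : symbMat W (2 * ξ) *ᵥ _ = symbMat b ξ *ᵥ (symbMat W ξ *ᵥ _)) ℓ
    rw [hΦξ, mulVec_mulVec, mulVec_mulVec, hbsymb, mul_assoc _ (symbMat U ξ), (hUW ξ).1, mul_one]
end
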